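/- Let Diagram 1 of abelian groups be given and let (X₁, i₁, j₁, m₁, n₁) be an extension of Diagram 1. Write E₁ = j₁(E), H₁ = i₁(H), P₁ = (i₁∘μ)(P) ⊆ X₁, let Y = F ×_Q G, and let α : Hom(R ⊕ S, P) → Ext¹(Q,P) be the connecting homomorphism from the short exact sequence 0 → R ⊕ S → Y → Q → 0. Assume: (a) α is surjective, and (b) every group homomorphism λ : E₁ + H₁ → P which vanishes on P₁ admits an extension to a homomorphism Λ : X₁ → P. Then for every extension (X₂, i₂, j₂, m₂, n₂) of Diagram 1 there exists a compatible isomorphism φ : X₁ → X₂, i.e., an isomorphism with φ∘i₁ = i₂, φ∘j₁ = j₂, m₂∘φ = m₁, and n₂∘φ = n₁. -/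

import Mathlib

universe u

open CategoryTheory

noncomputable instance : HasDerivedCategory.{max (u+1) u} AddCommGrpCat.{u} :=
  HasDerivedCategory.standard _

instance : HasExt.{max (u+1) u} AddCommGrpCat.{u} :=
  hasExt_of_hasDerivedCategory _

variable {F G Q R S : Type u}
  [AddCommGroup F] [AddCommGroup G] [AddCommGroup Q] [AddCommGroup R] [AddCommGroup S]

def pullbackSubgroup (πF : F →+ Q) (πG : G →+ Q) : AddSubgroup (F × G) where
  carrier := {p | πF p.1 = πG p.2}
  zero_mem' := by simp
  add_mem' := by
    intro a b ha hb
    simp only [Set.mem_setOf_eq, Prod.fst_add, Prod.snd_add, map_add] at *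
    rw [ha, hb]
  neg_mem' := by
    intro a ha
    simp only [Set.mem_setOf_eq, Prod.fst_neg, Prod.snd_neg, map_neg] at *
    rw [ha]

def iotaRS (ρ : R →+ F) (σ : S →+ G) (πF : F →+ Q) (πG : G →+ Q)
    (hkerF : AddMonoidHom.ker πF = AddMonoidHom.range ρ)
    (hkerG : AddMonoidHom.ker πG = AddMonoidHom.range σ) :
    R × S →+ pullbackSubgroup πF πG :=
  AddMonoidHom.codRestrict (AddMonoidHom.prodMap ρ σ) _ (by
    intro p
    have h1 : ρ p.1 ∈ AddMonoidHom.ker πF := by rw [hkerF]; exact ⟨p.1, rfl⟩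
    have h2 : σ p.2 ∈ AddMonoidHom.ker πG := by rw [hkerG]; exact ⟨p.2, rfl⟩
    show πF (ρ p.1) = πG (σ p.2)
    rw [AddMonoidHom.mem_ker] at h1 h2
    rw [h1, h2])

def piY (πF : F →+ Q) (πG : G →+ Q) : pullbackSubgroup πF πG →+ Q :=
  πF.comp ((AddMonoidHom.fst F G).comp (pullbackSubgroup πF πG).subtype)

/-- The short complex `R ⊕ S → Y → Q` in the category of abelian groups. -/
def pullbackShortComplex (ρ : R →+ F) (σ : S →+ G) (πF : F →+ Q) (πG : G →+ Q)
    (hkerF : AddMonoidHom.ker πF = AddMonoidHom.range ρ)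
    (hkerG : AddMonoidHom.ker πG = AddMonoidHom.range σ) :
    ShortComplex AddCommGrpCat.{u} :=
  ShortComplex.mk
    (AddCommGrpCat.ofHom (iotaRS ρ σ πF πG hkerF hkerG))
    (AddCommGrpCat.ofHom (piY πF πG))
    (by
      ext p
      show πF (ρ p.1) = 0
      have h1 : ρ p.1 ∈ AddMonoidHom.ker πF := by rw [hkerF]; exact ⟨p.1, rfl⟩
      rwa [AddMonoidHom.mem_ker] at h1)

/-- The sequence `0 → R ⊕ S → Y → Q → 0` is short exact. -/
lemma pullbackShortComplex_shortExact
    (ρ : R →+ F) (σ : S →+ G) (πF : F →+ Q) (πG : G →+ Q)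
    (hρ : Function.Injective ρ) (hσ : Function.Injective σ)
    (hπF : Function.Surjective πF) (hπG : Function.Surjective πG)
    (hkerF : AddMonoidHom.ker πF = AddMonoidHom.range ρ)
    (hkerG : AddMonoidHom.ker πG = AddMonoidHom.range σ) :
    (pullbackShortComplex ρ σ πF πG hkerF hkerG).ShortExact where
  exact := by
    rw [ShortComplex.ab_exact_iff]
    intro y hy
    obtain ⟨⟨yf, yg⟩, hymem⟩ := y
    have hymem' : πF yf = πG yg := hymem
    have hy' : πF yf = 0 := hy
    have h1 : yf ∈ AddMonoidHom.ker πF := hy'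
    rw [hkerF] at h1
    obtain ⟨r, hr⟩ := h1
    have h2 : yg ∈ AddMonoidHom.ker πG := by
      rw [AddMonoidHom.mem_ker, ← hymem']; exact hy'
    rw [hkerG] at h2
    obtain ⟨s, hs⟩ := h2
    exact ⟨(r, s), Subtype.ext (Prod.ext hr hs)⟩
  mono_f := by
    rw [AddCommGrpCat.mono_iff_injective]
    intro a b hab
    have h1 : (ρ.prodMap σ) a = (ρ.prodMap σ) b := congrArg Subtype.val hab
    have h2 : ρ a.1 = ρ b.1 := congrArg Prod.fst h1
    have h3 : σ a.2 = σ b.2 := congrArg Prod.snd h1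
    exact Prod.ext (hρ h2) (hσ h3)
  epi_g := by
    rw [AddCommGrpCat.epi_iff_surjective]
    intro q
    obtain ⟨f, hf⟩ := hπF q
    obtain ⟨g, hg⟩ := hπG q
    exact ⟨⟨(f, g), hf.trans hg.symm⟩, hf⟩

open Abelian in
/-- The connecting homomorphism `α : Hom(R ⊕ S, P) → Ext¹(Q, P)` obtained by applying
`Hom(−, P)` to the short exact sequence `0 → R ⊕ S → Y → Q → 0`; it is given by the
Yoneda composition of the extension class of this sequence with a homomorphism. -/
noncomputable def alphaMap {P : Type u} [AddCommGroup P]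
    (ρ : R →+ F) (σ : S →+ G) (πF : F →+ Q) (πG : G →+ Q)
    (hρ : Function.Injective ρ) (hσ : Function.Injective σ)
    (hπF : Function.Surjective πF) (hπG : Function.Surjective πG)
    (hkerF : AddMonoidHom.ker πF = AddMonoidHom.range ρ)
    (hkerG : AddMonoidHom.ker πG = AddMonoidHom.range σ) :
    (R × S →+ P) → Ext (AddCommGrpCat.of Q) (AddCommGrpCat.of P) 1 :=
  fun lam =>
    (pullbackShortComplex_shortExact ρ σ πF πG hρ hσ hπF hπG hkerF hkerG).extClass.comp
      (Ext.mk₀ (AddCommGrpCat.ofHom lam)) (add_zero 1)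

/-!
Via `(mₖ, nₖ)` and `iₖ ∘ μ`, each `Xₖ` is an extension of `Y = F ×_Q G` by `P`. Hypothesis (b)
extends every `λ : R ⊕ S → P` to `Y` (through `E ⊕ H ↠ E₁ + H₁`, then `X₁ ↠ Y`), so `α = 0`
and (a) forces `Ext¹(Q, P) = 0`. Now `E₁ + H₁` is the kernel of `X₁ ↠ Q`, and on it
`j₁ e + i₁ h ↦ j₂ e + i₂ h` lifts `(m₁, n₁)` through `(m₂, n₂)`. Extending this partial lift to
all of `X₁` is a homomorphism-extension problem along `K ↪ X₁ ×_Y X₂ ↠ Q` (with `K` the preimage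
of `E₁ + H₁`), which `Ext¹(Q, P) = 0` solves. The lift is compatible with all four maps, hence
bijective by the five lemma.
-/

namespace AddMonoidHom

variable {A B C X : Type*} [AddCommGroup A] [AddCommGroup B] [AddCommGroup C] [AddCommGroup X]

theorem exists_comp_eq_of_surjective {g : A →+ B} (hg : Function.Surjective g) (f : A →+ C)
    (hker : g.ker ≤ f.ker) : ∃ f' : B →+ C, f'.comp g = f :=
  ⟨g.liftOfSurjective hg ⟨f, hker⟩, g.liftOfRightInverse_comp _ _ _⟩

theorem exists_comp_eq_of_injective {κ : A →+ B} (hκ : Function.Injective κ) (d : C →+ B)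
    (hrange : d.range ≤ κ.range) : ∃ d' : C →+ A, κ.comp d' = d :=
  ⟨(ofInjective hκ).symm.toAddMonoidHom.comp (d.codRestrict _ fun c => hrange ⟨c, rfl⟩),
    ext fun _ => apply_ofInjective_symm hκ _⟩

theorem exists_apply_codRestrict_eq {c : A →+ X} {Z : AddSubgroup X} (hZ : c.range = Z)
    (f : A →+ C) (hker : c.ker ≤ f.ker) :
    ∃ f' : Z →+ C, ∀ a, f' ⟨c a, hZ ▸ ⟨a, rfl⟩⟩ = f a := by
  have hc : Function.Surjective (c.codRestrict Z fun a => hZ ▸ ⟨a, rfl⟩) := by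
    rintro ⟨x, hx⟩
    obtain ⟨a, rfl⟩ := hZ ▸ hx
    exact ⟨a, rfl⟩
  obtain ⟨f', hf'⟩ := exists_comp_eq_of_surjective hc f (by rwa [ker_codRestrict])
  exact ⟨f', DFunLike.congr_fun hf'⟩

theorem range_coprod (f : A →+ C) (g : B →+ C) : (f.coprod g).range = f.range ⊔ g.range := by
  ext x
  simp [AddSubgroup.mem_sup, eq_comm]

end AddMonoidHom

theorem bijective_of_comp_eq_of_exact {A X₁ X₂ Y : Type*}
    [AddCommGroup A] [AddCommGroup X₁] [AddCommGroup X₂] [AddCommGroup Y]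
    {κ₁ : A →+ X₁} {κ₂ : A →+ X₂} {ψ₁ : X₁ →+ Y} {ψ₂ : X₂ →+ Y} {φ : X₁ →+ X₂}
    (hκ₂ : Function.Injective κ₂) (h₁ : Function.Exact κ₁ ψ₁) (h₂ : Function.Exact κ₂ ψ₂)
    (hrange : ψ₂.range ≤ ψ₁.range) (hκ : φ.comp κ₁ = κ₂) (hψ : ψ₂.comp φ = ψ₁) :
    Function.Bijective φ := by
  have hκ' (a : A) : φ (κ₁ a) = κ₂ a := DFunLike.congr_fun hκ a
  have hψ' (x : X₁) : ψ₂ (φ x) = ψ₁ x := DFunLike.congr_fun hψ x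
  refine ⟨(injective_iff_map_eq_zero φ).2 fun x hx => ?_, fun y => ?_⟩
  · obtain ⟨a, rfl⟩ := (h₁ x).1 (by rw [← hψ', hx, map_zero])
    rw [hκ₂ ((hκ' a).symm.trans (hx.trans (map_zero κ₂).symm)), map_zero]
  · obtain ⟨x, hx⟩ := hrange ⟨y, rfl⟩
    obtain ⟨a, ha⟩ := (h₂ (y - φ x)).1 (by rw [map_sub, hψ', hx, sub_self])
    exact ⟨x + κ₁ a, by rw [map_add, hκ', ha, add_sub_cancel]⟩

section SubsingletonExt

open Abelian

variable {A N : Type u} [AddCommGroup A] [AddCommGroup N]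
  [Subsingleton (Ext (AddCommGrpCat.of N) (AddCommGrpCat.of A) 1)]

theorem exists_comp_eq_of_subsingleton_ext {K M : Type u} [AddCommGroup K] [AddCommGroup M]
    {f : K →+ M} {g : M →+ N} (hf : Function.Injective f) (hg : Function.Surjective g)
    (hfg : Function.Exact f g) (lam : K →+ A) : ∃ Λ : M →+ A, Λ.comp f = lam := by
  let T : ShortComplex AddCommGrpCat.{u} :=
    ShortComplex.mk (AddCommGrpCat.ofHom f) (AddCommGrpCat.ofHom g)
      (by ext; exact hfg.apply_apply_eq_zero _)
  have hT : T.ShortExact :=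
    { exact := T.ab_exact_iff.2 fun y hy => (hfg y).1 hy
      mono_f := (AddCommGrpCat.mono_iff_injective _).2 hf
      epi_g := (AddCommGrpCat.epi_iff_surjective _).2 hg }
  obtain ⟨x, hx⟩ := Ext.contravariant_sequence_exact₁ hT (AddCommGrpCat.of A)
    (Ext.mk₀ (AddCommGrpCat.ofHom lam)) (add_zero 1) (Subsingleton.elim _ _)
  obtain ⟨Λ, rfl⟩ := (Ext.mk₀_bijective _ _).2 x
  rw [Ext.mk₀_comp_mk₀] at hx
  exact ⟨Λ.hom, congrArg AddCommGrpCat.Hom.hom ((Ext.mk₀_bijective _ _).1 hx)⟩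

variable {X₁ X₂ Y : Type u} [AddCommGroup X₁] [AddCommGroup X₂] [AddCommGroup Y]

theorem exists_lift_extending_of_subsingleton_ext {κ : A →+ X₂} {ψ₁ : X₁ →+ Y} {ψ₂ : X₂ →+ Y}
    (hκ : Function.Injective κ) (hκψ : Function.Exact κ ψ₂) (hrange : ψ₁.range ≤ ψ₂.range)
    {q : X₁ →+ N} (hq : Function.Surjective q) (φZ : q.ker →+ X₂)
    (hφZ : ψ₂.comp φZ = ψ₁.comp q.ker.subtype) :
    ∃ φ : X₁ →+ X₂, ψ₂.comp φ = ψ₁ ∧ φ.comp q.ker.subtype = φZ := by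
  let W : AddSubgroup (X₁ × X₂) :=
    (ψ₁.comp (AddMonoidHom.fst X₁ X₂)).eqLocus (ψ₂.comp (AddMonoidHom.snd X₁ X₂))
  let pr₁ : W →+ X₁ := (AddMonoidHom.fst X₁ X₂).comp W.subtype
  let pr₂ : W →+ X₂ := (AddMonoidHom.snd X₁ X₂).comp W.subtype
  have hW (w : W) : ψ₁ (pr₁ w) = ψ₂ (pr₂ w) := w.2
  have hpr₁ : Function.Surjective pr₁ := fun x => by
    obtain ⟨x₂, hx₂⟩ := hrange ⟨x, rfl⟩
    exact ⟨⟨(x, x₂), hx₂.symm⟩, rfl⟩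
  -- On `K = pr₁⁻¹(ker q)`, `w ↦ κ⁻¹(pr₂ w - φZ (pr₁ w))` retracts `W` onto `0 × κ(A)`; once it
  -- is extended to `W`, `pr₂ - κ ∘ ρ` kills `ker pr₁` and descends to the lift.
  let K : AddSubgroup W := q.ker.comap pr₁
  let d : K →+ X₂ := pr₂.comp K.subtype - φZ.comp (pr₁.addSubgroupComap q.ker)
  obtain ⟨ρ₀, hρ₀⟩ := AddMonoidHom.exists_comp_eq_of_injective hκ d <| by
    rintro _ ⟨w, rfl⟩
    refine (hκψ _).1 ?_
    have := DFunLike.congr_fun hφZ (pr₁.addSubgroupComap q.ker w)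
    simp only [AddMonoidHom.comp_apply] at this
    change ψ₂ (pr₂ w - φZ _) = 0
    rw [map_sub, this]
    exact sub_eq_zero.2 (hW w).symm
  obtain ⟨ρ, hρ⟩ := exists_comp_eq_of_subsingleton_ext (f := K.subtype) (g := q.comp pr₁)
    Subtype.val_injective (hq.comp hpr₁) (fun w => by simp [K]) ρ₀
  have hκρ (w : K) : κ (ρ w) = pr₂ w - φZ (pr₁.addSubgroupComap q.ker w) := by
    change κ ((ρ.comp K.subtype) w) = d w
    rw [hρ, ← hρ₀, AddMonoidHom.comp_apply]
  obtain ⟨φ, hφ⟩ := AddMonoidHom.exists_comp_eq_of_surjective hpr₁ (pr₂ - κ.comp ρ) <| by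
    intro w hw
    have hwK : w ∈ K := show q (pr₁ w) = 0 by rw [hw, map_zero]
    have hw' : pr₁.addSubgroupComap q.ker ⟨w, hwK⟩ = 0 := Subtype.ext hw
    change pr₂ w - κ (ρ w) = 0
    rw [hκρ ⟨w, hwK⟩, hw', map_zero, sub_zero, sub_self]
  have hφ' (w : W) : φ (pr₁ w) = pr₂ w - κ (ρ w) := DFunLike.congr_fun hφ w
  refine ⟨φ, AddMonoidHom.ext fun x => ?_, AddMonoidHom.ext fun z => ?_⟩
  · obtain ⟨w, rfl⟩ := hpr₁ x
    simp only [AddMonoidHom.comp_apply, hφ', map_sub, hκψ.apply_apply_eq_zero, sub_zero, hW]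
  · let w : W := ⟨(z, φZ z), (DFunLike.congr_fun hφZ z).symm⟩
    have hz : pr₁.addSubgroupComap q.ker ⟨w, z.2⟩ = z := rfl
    change φ (pr₁ w) = φZ z
    rw [hφ', hκρ ⟨w, z.2⟩, hz, sub_sub_cancel]

theorem exists_lift_comp_eq_of_subsingleton_ext {B : Type*} [AddCommGroup B] {κ : A →+ X₂}
    {ψ₁ : X₁ →+ Y} {ψ₂ : X₂ →+ Y} (hκ : Function.Injective κ) (hκψ : Function.Exact κ ψ₂)
    (hrange : ψ₁.range ≤ ψ₂.range) {q : X₁ →+ N} (hq : Function.Surjective q)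
    {c₁ : B →+ X₁} {c₂ : B →+ X₂} (hc₁q : Function.Exact c₁ q) (hker : c₁.ker ≤ c₂.ker)
    (hc : ψ₂.comp c₂ = ψ₁.comp c₁) :
    ∃ φ : X₁ →+ X₂, ψ₂.comp φ = ψ₁ ∧ φ.comp c₁ = c₂ := by
  have hZ : c₁.range = q.ker := (AddMonoidHom.exact_iff.1 hc₁q).symm
  obtain ⟨φZ, hφZ⟩ := AddMonoidHom.exists_apply_codRestrict_eq hZ c₂ hker
  obtain ⟨φ, hψφ, hφ⟩ := exists_lift_extending_of_subsingleton_ext hκ hκψ hrange hq φZ <|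
    AddMonoidHom.ext fun ⟨x, hx⟩ => by
      obtain ⟨b, rfl⟩ := (hZ ▸ hx : x ∈ c₁.range)
      simp only [AddMonoidHom.comp_apply, hφZ, AddSubgroup.coe_subtype]
      exact DFunLike.congr_fun hc b
  refine ⟨φ, hψφ, AddMonoidHom.ext fun b => ?_⟩
  have := DFunLike.congr_fun hφ ⟨c₁ b, hZ ▸ ⟨b, rfl⟩⟩
  simpa [hφZ] using this

end SubsingletonExt

open Abelian in
theorem subsingleton_ext_of_surjective_alphaMap {P : Type u} [AddCommGroup P]
    {ρ : R →+ F} {σ : S →+ G} {πF : F →+ Q} {πG : G →+ Q}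
    (hρ : Function.Injective ρ) (hσ : Function.Injective σ)
    (hπF : Function.Surjective πF) (hπG : Function.Surjective πG)
    (hkerF : AddMonoidHom.ker πF = AddMonoidHom.range ρ)
    (hkerG : AddMonoidHom.ker πG = AddMonoidHom.range σ)
    (halpha : Function.Surjective (alphaMap (P := P) ρ σ πF πG hρ hσ hπF hπG hkerF hkerG))
    (hextends : ∀ lam : R × S →+ P, ∃ L : pullbackSubgroup πF πG →+ P,
      L.comp (iotaRS ρ σ πF πG hkerF hkerG) = lam) :
    Subsingleton (Ext (AddCommGrpCat.of Q) (AddCommGrpCat.of P) 1) := by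
  refine subsingleton_of_forall_eq 0 fun c => ?_
  obtain ⟨lam, rfl⟩ := halpha c
  obtain ⟨L, rfl⟩ := hextends lam
  let T := pullbackShortComplex ρ σ πF πG hkerF hkerG
  have hLf : AddCommGrpCat.ofHom (L.comp (iotaRS ρ σ πF πG hkerF hkerG)) =
      T.f ≫ AddCommGrpCat.ofHom L := rfl
  change (pullbackShortComplex_shortExact ρ σ πF πG hρ hσ hπF hπG hkerF hkerG).extClass.comp
    (Ext.mk₀ (AddCommGrpCat.ofHom (L.comp (iotaRS ρ σ πF πG hkerF hkerG)))) (add_zero 1) = 0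
  erw [hLf, ← Ext.mk₀_comp_mk₀]
  exact ShortComplex.ShortExact.extClass_comp_assoc _ _

namespace DiagramExtension

variable {P E H X : Type u} [AddCommGroup P] [AddCommGroup E] [AddCommGroup H] [AddCommGroup X]
  {ν : P →+ E} {πE : E →+ R} {σ : S →+ G} {πG : G →+ Q} {μ : P →+ H} {πH : H →+ S}
  {ρ : R →+ F} {πF : F →+ Q} {i : H →+ X} {j : E →+ X} {m : X →+ F} {n : X →+ G}

theorem ker_prod_eq_range (hσ : Function.Injective σ) (hμπH : Function.Exact μ πH)
    (him : Function.Exact i m) (hni : n.comp i = σ.comp πH) :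
    (m.prod n).ker = (i.comp μ).range := by
  ext x
  constructor
  · intro hx
    obtain ⟨h, rfl⟩ := (him x).1 congr(Prod.fst $hx)
    have hσh : σ (πH h) = σ 0 := by
      rw [← AddMonoidHom.comp_apply, ← hni, map_zero]; exact congr(Prod.snd $hx)
    obtain ⟨p, rfl⟩ := (hμπH h).1 (hσ hσh)
    exact ⟨p, rfl⟩
  · rintro ⟨p, rfl⟩
    have hnp : n (i (μ p)) = 0 := by
      rw [← AddMonoidHom.comp_apply n, hni, AddMonoidHom.comp_apply, hμπH.apply_apply_eq_zero,
        map_zero]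
    exact Prod.ext (him.apply_apply_eq_zero _) hnp

theorem range_prod_eq_pullbackSubgroup (hπH : Function.Surjective πH)
    (hσπG : Function.Exact σ πG) (hm : Function.Surjective m) (him : Function.Exact i m)
    (hni : n.comp i = σ.comp πH) (hmn : πF.comp m = πG.comp n) :
    (m.prod n).range = pullbackSubgroup πF πG := by
  ext ⟨f, g⟩
  constructor
  · rintro ⟨x, hx⟩
    cases hx
    exact DFunLike.congr_fun hmn x
  · intro hfg
    change πF f = πG g at hfg
    obtain ⟨x, rfl⟩ := hm f
    obtain ⟨s, hs⟩ := (hσπG (g - n x)).1 (by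
      rw [map_sub, ← hfg, ← AddMonoidHom.comp_apply πG, ← hmn, AddMonoidHom.comp_apply, sub_self])
    obtain ⟨h, rfl⟩ := hπH s
    refine ⟨x + i h, Prod.ext (?_ : m (x + i h) = m x) (?_ : n (x + i h) = g)⟩
    · rw [map_add, him.apply_apply_eq_zero, add_zero]
    · rw [map_add, ← AddMonoidHom.comp_apply n i, hni, AddMonoidHom.comp_apply, hs,
        add_sub_cancel]

theorem ker_coprod_eq_range (hi : Function.Injective i) (hρ : Function.Injective ρ)
    (hνπE : Function.Exact ν πE) (him : Function.Exact i m) (hmj : m.comp j = ρ.comp πE)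
    (hij : i.comp μ = j.comp ν) :
    (j.coprod i).ker = (ν.prod (-μ)).range := by
  have hij' (p : P) : i (μ p) = j (ν p) := DFunLike.congr_fun hij p
  refine le_antisymm ?_ ?_
  · rintro ⟨e, h⟩ (heh : j e + i h = 0)
    have hρe : ρ (πE e) = ρ 0 := by
      have hme := congr(m $heh)
      rw [map_add, him.apply_apply_eq_zero, add_zero, map_zero] at hme
      rw [map_zero, ← hme, ← AddMonoidHom.comp_apply ρ πE, ← hmj, AddMonoidHom.comp_apply]
    obtain ⟨p, rfl⟩ := (hνπE e).1 (hρ hρe)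
    have hμh : μ p + h = 0 := hi <| by rw [map_add, map_zero, hij', heh]
    exact ⟨p, Prod.ext rfl (neg_eq_of_add_eq_zero_right hμh)⟩
  · rintro _ ⟨p, rfl⟩
    change j (ν p) + i (-μ p) = 0
    rw [map_neg, hij', add_neg_cancel]

theorem ker_comp_eq_range_coprod (hπE : Function.Surjective πE) (hρπF : Function.Exact ρ πF)
    (him : Function.Exact i m) (hmj : m.comp j = ρ.comp πE) :
    (πF.comp m).ker = (j.coprod i).range := by
  have hmj' (e : E) : m (j e) = ρ (πE e) := DFunLike.congr_fun hmj e
  ext x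
  constructor
  · intro (hx : πF (m x) = 0)
    obtain ⟨r, hr⟩ := (hρπF _).1 hx
    obtain ⟨e, rfl⟩ := hπE r
    obtain ⟨h, hh⟩ := (him (x - j e)).1 (by rw [map_sub, hmj', hr, sub_self])
    exact ⟨(e, h), by simp [hh]⟩
  · rintro ⟨⟨e, h⟩, rfl⟩
    change πF (m (j e + i h)) = 0
    rw [map_add, hmj', him.apply_apply_eq_zero, add_zero, hρπF.apply_apply_eq_zero]

theorem prod_comp_coprod (him : Function.Exact i m) (hjn : Function.Exact j n)
    (hmj : m.comp j = ρ.comp πE) (hni : n.comp i = σ.comp πH) :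
    (m.prod n).comp (j.coprod i) = (ρ.prodMap σ).comp (πE.prodMap πH) := by
  ext ⟨e, h⟩ : 1
  refine Prod.ext (?_ : m (j e + i h) = ρ (πE e)) (?_ : n (j e + i h) = σ (πH h))
  · rw [map_add, him.apply_apply_eq_zero, add_zero, ← AddMonoidHom.comp_apply, hmj]; rfl
  · rw [map_add, hjn.apply_apply_eq_zero, zero_add, ← AddMonoidHom.comp_apply, hni]; rfl

theorem exists_comp_iotaRS_eq_of_extension_property (hρ : Function.Injective ρ)
    (hσ : Function.Injective σ) (hπE : Function.Surjective πE) (hπH : Function.Surjective πH)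
    (hνπE : Function.Exact ν πE) (hμπH : Function.Exact μ πH)
    (hkerF : AddMonoidHom.ker πF = AddMonoidHom.range ρ)
    (hkerG : AddMonoidHom.ker πG = AddMonoidHom.range σ)
    (hi : Function.Injective i) (hm : Function.Surjective m) (him : Function.Exact i m)
    (hjn : Function.Exact j n) (hij : i.comp μ = j.comp ν) (hmj : m.comp j = ρ.comp πE)
    (hni : n.comp i = σ.comp πH) (hmn : πF.comp m = πG.comp n)
    (hext : ∀ lam : ↥(j.range ⊔ i.range) →+ P,
      (∀ x : ↥(j.range ⊔ i.range), (x : X) ∈ (i.comp μ).range → lam x = 0) →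
      ∃ Lam : X →+ P, ∀ x : ↥(j.range ⊔ i.range), Lam x = lam x)
    (lam : R × S →+ P) :
    ∃ L : pullbackSubgroup πF πG →+ P, L.comp (iotaRS ρ σ πF πG hkerF hkerG) = lam := by
  obtain ⟨lamZ, hlamZ⟩ := AddMonoidHom.exists_apply_codRestrict_eq (AddMonoidHom.range_coprod j i)
    (lam.comp (πE.prodMap πH)) <| by
      rw [ker_coprod_eq_range hi hρ hνπE him hmj hij]
      rintro _ ⟨p, rfl⟩
      change lam (πE (ν p), πH (-μ p)) = 0
      rw [hνπE.apply_apply_eq_zero, map_neg, hμπH.apply_apply_eq_zero, neg_zero]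
      exact lam.map_zero
  have hlamZP (x : ↥(j.range ⊔ i.range)) (hx : (x : X) ∈ (i.comp μ).range) : lamZ x = 0 := by
    obtain ⟨p, hp⟩ := hx
    have hxp : x = ⟨j.coprod i (0, μ p), AddMonoidHom.range_coprod j i ▸ ⟨_, rfl⟩⟩ :=
      Subtype.ext (by simp [← hp])
    rw [hxp, hlamZ]
    change lam (πE 0, πH (μ p)) = 0
    rw [map_zero, hμπH.apply_apply_eq_zero]
    exact lam.map_zero
  obtain ⟨Λ, hΛ⟩ := hext lamZ hlamZP
  have hrange := range_prod_eq_pullbackSubgroup hπH (AddMonoidHom.exact_iff.2 hkerG) hm him hni hmn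
  obtain ⟨L, hL⟩ := AddMonoidHom.exists_apply_codRestrict_eq hrange Λ <| by
    rw [ker_prod_eq_range hσ hμπH him hni]
    rintro _ ⟨p, rfl⟩
    have hmem : i (μ p) ∈ j.range ⊔ i.range := le_sup_right (α := AddSubgroup X) ⟨μ p, rfl⟩
    exact (hΛ ⟨_, hmem⟩).trans (hlamZP _ ⟨p, rfl⟩)
  refine ⟨L, AddMonoidHom.ext fun w => ?_⟩
  obtain ⟨z, rfl⟩ : ∃ z, πE.prodMap πH z = w := hπE.prodMap hπH w
  have hιψ : iotaRS ρ σ πF πG hkerF hkerG (πE.prodMap πH z) =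
      ⟨m.prod n (j.coprod i z), hrange ▸ ⟨_, rfl⟩⟩ :=
    Subtype.ext (DFunLike.congr_fun (prod_comp_coprod him hjn hmj hni) z).symm
  rw [AddMonoidHom.comp_apply, hιψ, hL]
  exact (hΛ _).trans (hlamZ z)

end DiagramExtension

open DiagramExtension

open Abelian in
theorem compatible_iso_of_alpha_surjective_and_extension_property_general
    {P E H X₁ : Type u} [AddCommGroup P] [AddCommGroup E] [AddCommGroup H] [AddCommGroup X₁]
    -- row 1 : 0 → P → E → R → 0
    (ν : P →+ E) (πE : E →+ R)
    (hπE : Function.Surjective πE)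
    (hrow1 : AddMonoidHom.ker πE = AddMonoidHom.range ν)
    -- row 2 : 0 → S → G → Q → 0
    (σ : S →+ G) (πG : G →+ Q)
    (hσ : Function.Injective σ) (hπG : Function.Surjective πG)
    (hrow2 : AddMonoidHom.ker πG = AddMonoidHom.range σ)
    -- column 1 : 0 → P → H → S → 0
    (μ : P →+ H) (πH : H →+ S)
    (hμ : Function.Injective μ) (hπH : Function.Surjective πH)
    (hcol1 : AddMonoidHom.ker πH = AddMonoidHom.range μ)
    -- column 2 : 0 → R → F → Q → 0
    (ρ : R →+ F) (πF : F →+ Q)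
    (hρ : Function.Injective ρ) (hπF : Function.Surjective πF)
    (hcol2 : AddMonoidHom.ker πF = AddMonoidHom.range ρ)
    -- the extension (X₁, i₁, j₁, m₁, n₁) of Diagram 1
    (i₁ : H →+ X₁) (j₁ : E →+ X₁) (m₁ : X₁ →+ F) (n₁ : X₁ →+ G)
    (hi₁ : Function.Injective i₁) (hm₁ : Function.Surjective m₁)
    (hmidrow₁ : AddMonoidHom.ker m₁ = AddMonoidHom.range i₁)
    (hmidcol₁ : AddMonoidHom.ker n₁ = AddMonoidHom.range j₁)
    (hsq1₁ : i₁.comp μ = j₁.comp ν)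
    (hsq2₁ : m₁.comp j₁ = ρ.comp πE)
    (hsq3₁ : n₁.comp i₁ = σ.comp πH)
    (hsq4₁ : πF.comp m₁ = πG.comp n₁)
    -- (a) : the connecting homomorphism α is surjective
    (halpha : Function.Surjective
      (alphaMap (P := P) ρ σ πF πG hρ hσ hπF hπG hcol2 hrow2))
    -- (b) : every homomorphism λ : E₁ + H₁ → P vanishing on P₁ extends to X₁
    (hext : ∀ lam : ↥(AddMonoidHom.range j₁ ⊔ AddMonoidHom.range i₁ : AddSubgroup X₁) →+ P,
      (∀ x : ↥(AddMonoidHom.range j₁ ⊔ AddMonoidHom.range i₁ : AddSubgroup X₁),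
          (x : X₁) ∈ AddMonoidHom.range (i₁.comp μ) → lam x = 0) →
      ∃ Lam : X₁ →+ P,
        ∀ x : ↥(AddMonoidHom.range j₁ ⊔ AddMonoidHom.range i₁ : AddSubgroup X₁),
          Lam (x : X₁) = lam x) :
    -- conclusion : every extension (X₂, i₂, j₂, m₂, n₂) admits a compatible isomorphism
    ∀ (X₂ : Type u) [AddCommGroup X₂]
      (i₂ : H →+ X₂) (j₂ : E →+ X₂) (m₂ : X₂ →+ F) (n₂ : X₂ →+ G),
      Function.Injective i₂ → Function.Surjective m₂ →
      AddMonoidHom.ker m₂ = AddMonoidHom.range i₂ →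
      Function.Injective j₂ → Function.Surjective n₂ →
      AddMonoidHom.ker n₂ = AddMonoidHom.range j₂ →
      i₂.comp μ = j₂.comp ν →
      m₂.comp j₂ = ρ.comp πE →
      n₂.comp i₂ = σ.comp πH →
      πF.comp m₂ = πG.comp n₂ →
      ∃ φ : X₁ ≃+ X₂,
        (∀ h : H, φ (i₁ h) = i₂ h) ∧
        (∀ e : E, φ (j₁ e) = j₂ e) ∧
        (∀ x : X₁, m₂ (φ x) = m₁ x) ∧
        (∀ x : X₁, n₂ (φ x) = n₁ x) := by
  intro X₂ _ i₂ j₂ m₂ n₂ hi₂ hm₂ hmidrow₂ _ _ hmidcol₂ hsq1₂ hsq2₂ hsq3₂ hsq4₂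
  rw [← AddMonoidHom.exact_iff] at hrow1 hcol1 hmidrow₁ hmidcol₁ hmidrow₂ hmidcol₂
  have hσπG := AddMonoidHom.exact_iff.2 hrow2
  have hρπF := AddMonoidHom.exact_iff.2 hcol2
  have := subsingleton_ext_of_surjective_alphaMap hρ hσ hπF hπG hcol2 hrow2 halpha
    (exists_comp_iotaRS_eq_of_extension_property hρ hσ hπE hπH hrow1 hcol1 hcol2 hrow2 hi₁ hm₁
      hmidrow₁ hmidcol₁ hsq1₁ hsq2₁ hsq3₁ hsq4₁ hext)
  have hrange₁ := range_prod_eq_pullbackSubgroup hπH hσπG hm₁ hmidrow₁ hsq3₁ hsq4₁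
  have hrange₂ := range_prod_eq_pullbackSubgroup hπH hσπG hm₂ hmidrow₂ hsq3₂ hsq4₂
  have hexact₁ := AddMonoidHom.exact_iff.2 (ker_prod_eq_range hσ hcol1 hmidrow₁ hsq3₁)
  have hexact₂ := AddMonoidHom.exact_iff.2 (ker_prod_eq_range hσ hcol1 hmidrow₂ hsq3₂)
  have hκ₂ : Function.Injective (i₂.comp μ) := hi₂.comp hμ
  obtain ⟨φ, hψφ, hφc⟩ := exists_lift_comp_eq_of_subsingleton_ext hκ₂ hexact₂
    (hrange₁.trans hrange₂.symm).le (hπF.comp hm₁)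
    (AddMonoidHom.exact_iff.2 (ker_comp_eq_range_coprod hπE hρπF hmidrow₁ hsq2₁))
    (by rw [ker_coprod_eq_range hi₁ hρ hrow1 hmidrow₁ hsq2₁ hsq1₁,
      ker_coprod_eq_range hi₂ hρ hrow1 hmidrow₂ hsq2₂ hsq1₂])
    ((prod_comp_coprod hmidrow₂ hmidcol₂ hsq2₂ hsq3₂).trans
      (prod_comp_coprod hmidrow₁ hmidcol₁ hsq2₁ hsq3₁).symm)
  have hφi (h : H) : φ (i₁ h) = i₂ h := by simpa using DFunLike.congr_fun hφc (0, h)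
  have hφj (e : E) : φ (j₁ e) = j₂ e := by simpa using DFunLike.congr_fun hφc (e, 0)
  have hbij := bijective_of_comp_eq_of_exact hκ₂ hexact₁ hexact₂
    (hrange₂.trans hrange₁.symm).le (AddMonoidHom.ext fun p => hφi (μ p)) hψφ
  exact ⟨AddEquiv.ofBijective φ hbij, hφi, hφj,
    fun x => congr(Prod.fst $(DFunLike.congr_fun hψφ x)),
    fun x => congr(Prod.snd $(DFunLike.congr_fun hψφ x))⟩

open Abelian in
/-- (One direction of Proposition `finaluniqueness` of the note.) Let `(X₁, i₁, j₁, m₁, n₁)`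
be an extension of Diagram 1 of abelian groups. If (a) the connecting homomorphism
`α : Hom(R ⊕ S, P) → Ext¹(Q,P)` of `0 → R ⊕ S → Y → Q → 0` (with `Y = F ×_Q G`) is
surjective, and (b) every homomorphism `λ : E₁ + H₁ → P` (where `E₁ = j₁(E)`, `H₁ = i₁(H)`)
vanishing on `P₁ = (i₁∘μ)(P)` extends to a homomorphism `Λ : X₁ → P`, then every extension
`(X₂, i₂, j₂, m₂, n₂)` of Diagram 1 admits a compatible isomorphism `φ : X₁ → X₂`, i.e.
`φ∘i₁ = i₂`, `φ∘j₁ = j₂`, `m₂∘φ = m₁`, `n₂∘φ = n₁`. -/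
theorem compatible_iso_of_alpha_surjective_and_extension_property
    {P E H X₁ : Type u} [AddCommGroup P] [AddCommGroup E] [AddCommGroup H] [AddCommGroup X₁]
    -- row 1 : 0 → P → E → R → 0
    (ν : P →+ E) (πE : E →+ R)
    (hν : Function.Injective ν) (hπE : Function.Surjective πE)
    (hrow1 : AddMonoidHom.ker πE = AddMonoidHom.range ν)
    -- row 2 : 0 → S → G → Q → 0
    (σ : S →+ G) (πG : G →+ Q)
    (hσ : Function.Injective σ) (hπG : Function.Surjective πG)
    (hrow2 : AddMonoidHom.ker πG = AddMonoidHom.range σ)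
    -- column 1 : 0 → P → H → S → 0
    (μ : P →+ H) (πH : H →+ S)
    (hμ : Function.Injective μ) (hπH : Function.Surjective πH)
    (hcol1 : AddMonoidHom.ker πH = AddMonoidHom.range μ)
    -- column 2 : 0 → R → F → Q → 0
    (ρ : R →+ F) (πF : F →+ Q)
    (hρ : Function.Injective ρ) (hπF : Function.Surjective πF)
    (hcol2 : AddMonoidHom.ker πF = AddMonoidHom.range ρ)
    -- the extension (X₁, i₁, j₁, m₁, n₁) of Diagram 1
    (i₁ : H →+ X₁) (j₁ : E →+ X₁) (m₁ : X₁ →+ F) (n₁ : X₁ →+ G)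
    (hi₁ : Function.Injective i₁) (hm₁ : Function.Surjective m₁)
    (hmidrow₁ : AddMonoidHom.ker m₁ = AddMonoidHom.range i₁)
    (hj₁ : Function.Injective j₁) (hn₁ : Function.Surjective n₁)
    (hmidcol₁ : AddMonoidHom.ker n₁ = AddMonoidHom.range j₁)
    (hsq1₁ : i₁.comp μ = j₁.comp ν)
    (hsq2₁ : m₁.comp j₁ = ρ.comp πE)
    (hsq3₁ : n₁.comp i₁ = σ.comp πH)
    (hsq4₁ : πF.comp m₁ = πG.comp n₁)
    -- (a) : the connecting homomorphism α is surjective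
    (halpha : Function.Surjective
      (alphaMap (P := P) ρ σ πF πG hρ hσ hπF hπG hcol2 hrow2))
    -- (b) : every homomorphism λ : E₁ + H₁ → P vanishing on P₁ extends to X₁
    (hext : ∀ lam : ↥(AddMonoidHom.range j₁ ⊔ AddMonoidHom.range i₁ : AddSubgroup X₁) →+ P,
      (∀ x : ↥(AddMonoidHom.range j₁ ⊔ AddMonoidHom.range i₁ : AddSubgroup X₁),
          (x : X₁) ∈ AddMonoidHom.range (i₁.comp μ) → lam x = 0) →
      ∃ Lam : X₁ →+ P,
        ∀ x : ↥(AddMonoidHom.range j₁ ⊔ AddMonoidHom.range i₁ : AddSubgroup X₁),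
          Lam (x : X₁) = lam x) :
    -- conclusion : every extension (X₂, i₂, j₂, m₂, n₂) admits a compatible isomorphism
    ∀ (X₂ : Type u) [AddCommGroup X₂]
      (i₂ : H →+ X₂) (j₂ : E →+ X₂) (m₂ : X₂ →+ F) (n₂ : X₂ →+ G),
      Function.Injective i₂ → Function.Surjective m₂ →
      AddMonoidHom.ker m₂ = AddMonoidHom.range i₂ →
      Function.Injective j₂ → Function.Surjective n₂ →
      AddMonoidHom.ker n₂ = AddMonoidHom.range j₂ →
      i₂.comp μ = j₂.comp ν →
      m₂.comp j₂ = ρ.comp πE →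
      n₂.comp i₂ = σ.comp πH →
      πF.comp m₂ = πG.comp n₂ →
      ∃ φ : X₁ ≃+ X₂,
        (∀ h : H, φ (i₁ h) = i₂ h) ∧
        (∀ e : E, φ (j₁ e) = j₂ e) ∧
        (∀ x : X₁, m₂ (φ x) = m₁ x) ∧
        (∀ x : X₁, n₂ (φ x) = n₁ x) :=
  compatible_iso_of_alpha_surjective_and_extension_property_general ν πE hπE hrow1 σ πG hσ hπG hrow2
    μ πH hμ hπH hcol1 ρ πF hρ hπF hcol2 i₁ j₁ m₁ n₁ hi₁ hm₁ hmidrow₁ hmidcol₁ hsq1₁ hsq2₁ hsq3₁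
    hsq4₁ halpha hext
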